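/- arXiv:1408.5034 — 4 statements merged into one kernel-verified Lean document; each statement's English description precedes it below -/
import Mathlib

section
/- Let G be a finite group that factorizes as G = A*B, where A and B are subgroups of coprime orders such that every prime dividing the order of A is smaller than every prime dividing the order of B. If the intersection of the lower central series of G (the nilpotent residual γ_∞(G)) is cyclic, then B is normal in G. -/
/-!
Let `N = γ_∞(G)`, so `G ⧸ N` is nilpotent. The elements of the cyclic group `N` of order prime to
`|B|` form a subgroup `Q`, characteristic in `N`, hence normal in `G`, with `|Q| ∣ |A|`. Each prime
factor of `|Aut Q| = φ(|Q|)` is at most a prime factor of `|Q|`, hence smaller than every prime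
factor of `|B|`; so `B` centralizes `Q`. In the nilpotent group `G ⧸ N` the elements of order prime
to `|A|` form a normal subgroup; its preimage `K` is normal in `G` and contains `Q` and `B`, and as
`|K ⧸ N|` and `|N ⧸ Q|` are prime to `|A|`, comparing orders gives `K = Q ⊔ B ≅ Q × B`. So `B`, the
set of elements of `K` of order prime to `|Q|`, is normal in `G`.
-/

theorem Nat.coprime_totient_of_forall_prime_lt {q b : ℕ}
    (h : ∀ p r : ℕ, p.Prime → r.Prime → p ∣ q → r ∣ b → p < r) : q.totient.Coprime b := by
  refine Nat.coprime_of_dvd fun r hr hrq hrb => ?_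
  rcases eq_or_ne q 0 with rfl | hq
  · exact lt_irrefl r (h r r hr hr (dvd_zero r) hrb)
  rw [Nat.totient_eq_prod_factorization hq] at hrq
  obtain ⟨p, hp, hrp⟩ := hr.prime.exists_mem_finset_dvd hrq
  have hpq : p ∈ q.primeFactors := Nat.support_factorization q ▸ hp
  have hp' := Nat.prime_of_mem_primeFactors hpq
  have hpr := h p r hp' hr (Nat.dvd_of_mem_primeFactors hpq) hrb
  rcases (Nat.Prime.dvd_mul hr).mp hrp with hrp | hrp
  · exact absurd (Nat.le_of_dvd hp'.pos (hr.dvd_of_dvd_pow hrp)) (not_le.mpr hpr)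
  · have := Nat.le_of_dvd (Nat.sub_pos_of_lt hp'.one_lt) hrp
    omega

theorem Pi.coprime_orderOf_iff {ι : Type*} [Finite ι] {M : ι → Type*} [∀ i, Monoid (M i)]
    {x : ∀ i, M i} {m : ℕ} : (orderOf x).Coprime m ↔ ∀ i, (orderOf (x i)).Coprime m := by
  have := Fintype.ofFinite ι
  refine ⟨fun h i => h.coprime_dvd_left (orderOf_apply_dvd_orderOf i), fun h => ?_⟩
  rw [Pi.orderOf]
  exact (Nat.Coprime.prod_left fun i _ => h i).coprime_dvd_left (Finset.lcm_dvd_prod _ _)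

theorem IsPGroup.coprime_orderOf_mul {p : ℕ} [Fact p.Prime] {P : Type*} [Group P]
    (hP : IsPGroup p P) {m : ℕ} {x y : P} (hx : (orderOf x).Coprime m)
    (hy : (orderOf y).Coprime m) : (orderOf (x * y)).Coprime m := by
  by_cases hpm : p ∣ m
  · have h1 : ∀ z : P, (orderOf z).Coprime m → z = 1 := fun z hz => by
      by_contra hz1
      exact (Nat.Prime.coprime_iff_not_dvd Fact.out).mp
        (hz.coprime_dvd_left (hP.dvd_orderOf hz1)) hpm
    rw [h1 x hx, h1 y hy, one_mul, orderOf_one]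
    exact Nat.coprime_one_left m
  · exact hP.orderOf_coprime ((Nat.Prime.coprime_iff_not_dvd Fact.out).mpr hpm) _

theorem Group.IsNilpotent.coprime_orderOf_mul {H : Type*} [Group H] [Finite H]
    [Group.IsNilpotent H] {m : ℕ} {x y : H} (hx : (orderOf x).Coprime m)
    (hy : (orderOf y).Coprime m) : (orderOf (x * y)).Coprime m := by
  obtain ⟨e⟩ : Nonempty
      ((∀ p : (Nat.card H).primeFactors, ∀ P : Sylow p H, (P : Subgroup H)) ≃* H) :=
    ((isNilpotent_of_finite_tfae (G := H)).out 0 4).mp ‹_›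
  rw [← MulEquiv.orderOf_eq e.symm, Pi.coprime_orderOf_iff] at hx hy ⊢
  intro p
  have : Fact (p : ℕ).Prime := ⟨Nat.prime_of_mem_primeFactors p.2⟩
  rw [map_mul, Pi.mul_apply, Pi.coprime_orderOf_iff]
  intro P
  exact P.isPGroup'.coprime_orderOf_mul (Pi.coprime_orderOf_iff.mp (hx p) P)
    (Pi.coprime_orderOf_iff.mp (hy p) P)

instance IsCyclic.isNilpotent {G : Type*} [Group G] [IsCyclic G] : Group.IsNilpotent G := by
  let := IsCyclic.commGroup (α := G)
  infer_instance

def coprimeOrderSubgroup (H : Type*) [Group H] [Finite H] [Group.IsNilpotent H] (m : ℕ) :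
    Subgroup H where
  carrier := {x | (orderOf x).Coprime m}
  mul_mem' := Group.IsNilpotent.coprime_orderOf_mul
  one_mem' := by simp
  inv_mem' := by simp

namespace coprimeOrderSubgroup

variable {H : Type*} [Group H] [Finite H] [Group.IsNilpotent H] {m : ℕ}

theorem mem_iff {x : H} : x ∈ coprimeOrderSubgroup H m ↔ (orderOf x).Coprime m := Iff.rfl

instance characteristic : (coprimeOrderSubgroup H m).Characteristic :=
  Subgroup.characteristic_iff_le_comap.mpr fun φ x hx => by
    rwa [Subgroup.mem_comap, MulEquiv.coe_toMonoidHom, mem_iff, MulEquiv.orderOf_eq]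

theorem card_coprime : (Nat.card (coprimeOrderSubgroup H m)).Coprime m := by
  refine Nat.coprime_of_dvd fun p hp hpH hpm => ?_
  have : Fact p.Prime := ⟨hp⟩
  obtain ⟨x, hx⟩ := exists_prime_orderOf_dvd_card' p hpH
  have := x.2
  rw [mem_iff, Subgroup.orderOf_coe, hx, Nat.Prime.coprime_iff_not_dvd hp] at this
  exact this hpm

theorem index_coprime {n : ℕ} (hmn : m.Coprime n) :
    (coprimeOrderSubgroup H m).index.Coprime n := by
  refine Nat.coprime_of_dvd fun p hp hpS hpn => ?_
  have : Fact p.Prime := ⟨hp⟩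
  have hpm : ¬p ∣ m := fun hpm => (Nat.Prime.not_coprime_iff_dvd.mpr ⟨p, hp, hpm, hpn⟩) hmn
  rw [Subgroup.index_eq_card] at hpS
  obtain ⟨y, hy⟩ := exists_prime_orderOf_dvd_card' p hpS
  obtain ⟨x, rfl⟩ := QuotientGroup.mk_surjective y
  have hxp : x ^ p ∈ coprimeOrderSubgroup H m := by
    rw [← QuotientGroup.eq_one_iff, QuotientGroup.mk_pow, ← hy, pow_orderOf_eq_one]
  have hx : x ∈ coprimeOrderSubgroup H m := by
    refine Nat.Coprime.coprime_dvd_left (orderOf_dvd_of_pow_eq_one (n := p * orderOf (x ^ p)) ?_)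
      (Nat.Coprime.mul_left ((Nat.Prime.coprime_iff_not_dvd hp).mpr hpm) hxp)
    rw [pow_mul, pow_orderOf_eq_one]
  rw [← QuotientGroup.eq_one_iff, ← orderOf_eq_one_iff, hy] at hx
  exact hp.one_lt.ne' hx

end coprimeOrderSubgroup

theorem Subgroup.commute_of_coprime_totient {G : Type*} [Group G] {Q : Subgroup G} [Q.Normal]
    [Finite Q] [IsCyclic Q] {x : G} (hx : (orderOf x).Coprime (Nat.card Q).totient)
    {y : G} (hy : y ∈ Q) : Commute x y := by
  have hc : MulAut.conjNormal (H := Q) x = 1 := by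
    rw [← orderOf_eq_one_iff, ← Nat.coprime_self]
    refine Nat.Coprime.coprime_dvd_left (orderOf_map_dvd _ x) (hx.coprime_dvd_right ?_)
    rw [← IsCyclic.card_mulAut]
    exact _root_.orderOf_dvd_natCard _
  have := MulAut.conjNormal_apply (H := Q) x ⟨y, hy⟩
  rw [hc] at this
  exact (eq_mul_inv_iff_mul_eq.mp this).symm

theorem Subgroup.normal_of_normal_sup {G : Type*} [Group G] {Q B : Subgroup G} [Q.Normal]
    [(Q ⊔ B).Normal] (hcomm : ∀ z ∈ B, ∀ y ∈ Q, Commute z y)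
    (hcop : (Nat.card Q).Coprime (Nat.card B)) : B.Normal := by
  refine ⟨fun z hz g => ?_⟩
  obtain ⟨y, hy, w, hw, hyw⟩ :=
    mem_sup_of_normal_left.mp ((inferInstance : (Q ⊔ B).Normal).conj_mem z (mem_sup_right hz) g)
  have hyQ := orderOf_dvd_natCard Q hy
  have hord : orderOf y * orderOf w = orderOf z := by
    rw [← (hcomm w hw y hy).symm.orderOf_mul_eq_mul_orderOf_of_coprime
      ((hcop.coprime_dvd_left hyQ).coprime_dvd_right (orderOf_dvd_natCard B hw)),
      hyw, ← MulAut.conj_apply, MulEquiv.orderOf_eq]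
  have hy1 : y = 1 := by
    rw [← orderOf_eq_one_iff, ← Nat.coprime_self]
    exact (hcop.coprime_dvd_left hyQ).coprime_dvd_right
      ((Dvd.intro _ hord).trans (orderOf_dvd_natCard B hz))
  rw [← hyw, hy1, one_mul]
  exact hw

theorem Subgroup.exists_lowerCentralSeries_eq_iInf {G : Type*} [Group G] [Finite G] :
    ∃ k, (⊤ : Subgroup G).lowerCentralSeries k = ⨅ n, (⊤ : Subgroup G).lowerCentralSeries n := by
  obtain ⟨k, hk⟩ :=
    WellFoundedLT.antitone_chain_condition (lowerCentralSeries_antitone (⊤ : Subgroup G))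
  refine ⟨k, le_antisymm (le_iInf fun n => ?_) (iInf_le _ k)⟩
  rcases le_total n k with hnk | hkn
  · exact lowerCentralSeries_antitone ⊤ hnk
  · exact (hk n hkn).le

instance Subgroup.isNilpotent_quotient_iInf_lowerCentralSeries {G : Type*} [Group G] [Finite G] :
    Group.IsNilpotent (G ⧸ ⨅ n, (⊤ : Subgroup G).lowerCentralSeries n) := by
  obtain ⟨k, hk⟩ := exists_lowerCentralSeries_eq_iInf (G := G)
  refine nilpotent_iff_lowerCentralSeries.mpr ⟨k, ?_⟩
  rw [← map_top_of_surjective _ (QuotientGroup.mk'_surjective _), ← map_lowerCentralSeries, hk,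
    map_eq_bot_iff, QuotientGroup.ker_mk']

theorem Subgroup.card_eq_card_mul_card_of_forall_eq_mul {G : Type*} [Group G] [Finite G]
    {A B : Subgroup G} (hfact : ∀ g : G, ∃ a ∈ A, ∃ b ∈ B, g = a * b)
    (hcop : (Nat.card A).Coprime (Nat.card B)) : Nat.card G = Nat.card A * Nat.card B := by
  refine le_antisymm ?_ (Nat.le_of_dvd Nat.card_pos
    (hcop.mul_dvd_of_dvd_of_dvd (card_subgroup_dvd_card A) (card_subgroup_dvd_card B)))
  have hsurj : Function.Surjective fun p : A × B => (p.1 : G) * p.2 := fun g => by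
    obtain ⟨a, ha, b, hb, rfl⟩ := hfact g
    exact ⟨(⟨a, ha⟩, ⟨b, hb⟩), rfl⟩
  exact (Nat.card_le_card_of_surjective _ hsurj).trans_eq (Nat.card_prod _ _)

theorem Subgroup.sup_eq_of_card_dvd {G : Type*} [Group G] [Finite G] {Q B K : Subgroup G}
    (hQK : Q ≤ K) (hBK : B ≤ K) (hcop : (Nat.card Q).Coprime (Nat.card B))
    (hK : Nat.card K ∣ Nat.card Q * Nat.card B) : Q ⊔ B = K := by
  refine eq_of_le_of_card_ge (sup_le hQK hBK) (Nat.le_of_dvd Nat.card_pos (hK.trans ?_))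
  exact hcop.mul_dvd_of_dvd_of_dvd (card_dvd_of_le le_sup_left) (card_dvd_of_le le_sup_right)

theorem stmt_3 {G : Type*} [Group G] [Finite G] (A B : Subgroup G)
    (hfact : ∀ g : G, ∃ a ∈ A, ∃ b ∈ B, g = a * b)
    (hcop : Nat.Coprime (Nat.card A) (Nat.card B))
    (hlt : ∀ p₁ p₂ : ℕ, p₁.Prime → p₂.Prime → p₁ ∣ Nat.card A → p₂ ∣ Nat.card B → p₁ < p₂)
    (hcyc : IsCyclic (⨅ n : ℕ, (⊤ : Subgroup G).lowerCentralSeries n : Subgroup G)) :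
    B.Normal := by
  have hG := Subgroup.card_eq_card_mul_card_of_forall_eq_mul hfact hcop
  set N := ⨅ n : ℕ, (⊤ : Subgroup G).lowerCentralSeries n
  set C := coprimeOrderSubgroup N (Nat.card B)
  set S := coprimeOrderSubgroup (G ⧸ N) (Nat.card A)
  set Q := C.map N.subtype
  set K := S.comap (QuotientGroup.mk' N)
  have hQN : Q ≤ N := Subgroup.map_subtype_le C
  have : IsCyclic Q := Subgroup.isCyclic_of_le hQN
  have hQcard : Nat.card Q = Nat.card C := Subgroup.card_map_of_injective N.subtype_injective
  have hQB : (Nat.card Q).Coprime (Nat.card B) := hQcard ▸ coprimeOrderSubgroup.card_coprime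
  have hQA : Nat.card Q ∣ Nat.card A :=
    hQB.dvd_of_dvd_mul_right (hG ▸ Subgroup.card_subgroup_dvd_card Q)
  have hcomm : ∀ z ∈ B, ∀ y ∈ Q, Commute z y := fun z hz _ hy =>
    Subgroup.commute_of_coprime_totient ((Nat.coprime_totient_of_forall_prime_lt
      fun p r hp hr hpQ hrB => hlt p r hp hr (hpQ.trans hQA) hrB).symm.coprime_dvd_left
        (Subgroup.orderOf_dvd_natCard B hz)) hy
  have hNK : N ≤ K := by simpa using (QuotientGroup.mk' N).ker_le_comap S
  have hBK : B ≤ K := fun z hz => coprimeOrderSubgroup.mem_iff.mpr <|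
    hcop.symm.coprime_dvd_left ((orderOf_map_dvd _ z).trans (Subgroup.orderOf_dvd_natCard B hz))
  have hK : Nat.card K ∣ Nat.card Q * Nat.card B := by
    have hKcard : Nat.card K = Nat.card Q * (C.index * Nat.card S) := by
      rw [← mul_assoc, hQcard, Subgroup.card_mul_index]
      exact QuotientGroup.card_preimage_mk N S
    have hcopA : (C.index * Nat.card S).Coprime (Nat.card A) :=
      (coprimeOrderSubgroup.index_coprime hcop.symm).mul_left coprimeOrderSubgroup.card_coprime
    rw [hKcard]
    refine mul_dvd_mul_left _ (hcopA.dvd_of_dvd_mul_left ?_)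
    exact (Dvd.intro_left _ hKcard.symm).trans (hG ▸ Subgroup.card_subgroup_dvd_card K)
  have : (Q ⊔ B).Normal := Subgroup.sup_eq_of_card_dvd (hQN.trans hNK) hBK hQB hK ▸ inferInstance
  exact Subgroup.normal_of_normal_sup hcomm hQB
end

section
/- Let A and G be finite groups of coprime orders with A acting on G by automorphisms. Then [[G,A],A] = [G,A]. -/
/-! Write `n = g⁻¹ · a(g)` and `N = [[G,A],A]`. Then `g⁻¹ · aᵏ(g) ∈ nᵏ · N` for all `k`,
because `a` moves each `c = g⁻¹ · aᵏ(g) ∈ [G,A]` only by the factor `c⁻¹ · a(c) ∈ N`.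
Taking `k = orderOf a` gives `nᵐ ∈ N` with `m = orderOf a` coprime to `orderOf n`,
hence `n ∈ N`. -/

/-- The subgroup `[H,A]` generated by `{h⁻¹ · (a • h) : h ∈ H, a ∈ A}`, for an action
of `A` on `G` by automorphisms and a subgroup `H` of `G`. -/
def commSubgroup {A G : Type*} [Group A] [Group G] (φ : A →* MulAut G) (H : Subgroup G) :
    Subgroup G :=
  Subgroup.closure {x : G | ∃ h ∈ H, ∃ a : A, x = h⁻¹ * φ a h}

namespace commSubgroup

variable {A G : Type*} [Group A] [Group G] (φ : A →* MulAut G)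

theorem inv_mul_apply_mem {H : Subgroup G} {h : G} (hh : h ∈ H) (a : A) :
    h⁻¹ * φ a h ∈ commSubgroup φ H :=
  Subgroup.subset_closure ⟨h, hh, a, rfl⟩

theorem monotone : Monotone (commSubgroup φ) := fun _ _ hHK ↦
  Subgroup.closure_mono fun _ ⟨h, hh, a, hx⟩ ↦ ⟨h, hHK hh, a, hx⟩

theorem exists_inv_mul_apply_pow_eq {H : Subgroup G} {g : G} (hg : g ∈ H) (a : A) (k : ℕ) :
    ∃ d ∈ commSubgroup φ (commSubgroup φ H), g⁻¹ * φ (a ^ k) g = (g⁻¹ * φ a g) ^ k * d := by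
  induction k with
  | zero => exact ⟨1, one_mem _, by simp⟩
  | succ k ih =>
    obtain ⟨d, hd, hk⟩ := ih
    set c := g⁻¹ * φ (a ^ k) g
    have hstep : g⁻¹ * φ (a ^ (k + 1)) g = (g⁻¹ * φ a g) * φ a c := by
      simp [c, pow_succ', mul_assoc]
    refine ⟨d * (c⁻¹ * φ a c), mul_mem hd (inv_mul_apply_mem φ (inv_mul_apply_mem φ hg _) a), ?_⟩
    rw [hstep, ← mul_inv_cancel_left c (φ a c), hk, pow_succ']
    group

theorem inv_mul_apply_pow_orderOf_mem {H : Subgroup G} {g : G} (hg : g ∈ H) (a : A) :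
    (g⁻¹ * φ a g) ^ orderOf a ∈ commSubgroup φ (commSubgroup φ H) := by
  obtain ⟨d, hd, h⟩ := exists_inv_mul_apply_pow_eq φ hg a (orderOf a)
  rw [pow_orderOf_eq_one, map_one, MulAut.one_apply, inv_mul_cancel, eq_comm,
    mul_eq_one_iff_eq_inv] at h
  exact h ▸ inv_mem hd

theorem inv_mul_apply_mem_commSubgroup_commSubgroup
    (hcop : Nat.Coprime (Nat.card A) (Nat.card G)) {H : Subgroup G} {g : G} (hg : g ∈ H)
    (a : A) : g⁻¹ * φ a g ∈ commSubgroup φ (commSubgroup φ H) := by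
  have hcop' : (orderOf a).Coprime (orderOf (g⁻¹ * φ a g)) :=
    (hcop.coprime_dvd_left (orderOf_dvd_natCard a)).coprime_dvd_right (orderOf_dvd_natCard _)
  obtain ⟨m, hm⟩ := exists_pow_eq_self_of_coprime hcop'
  exact hm ▸ pow_mem (inv_mul_apply_pow_orderOf_mem φ hg a) m

end commSubgroup

theorem stmt_5_general {A G : Type*} [Group A] [Group G]
    (hcop : Nat.Coprime (Nat.card A) (Nat.card G)) (φ : A →* MulAut G) :
    commSubgroup φ (commSubgroup φ (⊤ : Subgroup G)) = commSubgroup φ (⊤ : Subgroup G) := by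
  refine le_antisymm (commSubgroup.monotone φ le_top) ((Subgroup.closure_le _).mpr ?_)
  rintro _ ⟨g, hg, a, rfl⟩
  exact commSubgroup.inv_mul_apply_mem_commSubgroup_commSubgroup φ hcop hg a

/-- Coprime action: `[[G,A],A] = [G,A]`. -/
theorem stmt_5 {A G : Type*} [Group A] [Group G] [Finite A] [Finite G]
    (hcop : Nat.Coprime (Nat.card A) (Nat.card G)) (φ : A →* MulAut G) :
    commSubgroup φ (commSubgroup φ (⊤ : Subgroup G)) = commSubgroup φ (⊤ : Subgroup G) :=
  stmt_5_general hcop φ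
end

section
/- Let A = ⟨x,y⟩ be a finite abelian group generated by two elements acting on a finite abelian group B by automorphisms. Then every element of the subgroup [B,A] (generated by b⁻¹·(a•b) for b ∈ B, a ∈ A) is a commutator in the semidirect product B ⋊ A. -/
/-!
Write `[z, a] = z⁻¹ (a • z)`. Since `B` is abelian, `z ↦ [z, a]` is an endomorphism of `B`, and
the elements `a` with `[B, a] ≤ H` form a subgroup of `A` for any `H ≤ B`. Taking
`H = [B, x] [B, y]` and using `A = ⟨x, y⟩` gives `[B, A] = [B, x] [B, y]`, so every element of
`[B, A]` is `[q, x] [p, y]`. In `B ⋊ A` with `A` abelian, that is the commutator of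
`(xy • p)⁻¹ x` and `(xy • q) y`.
-/

open SemidirectProduct

section Group

variable {A B : Type*} [Group A] [Group B] (φ : A →* MulAut B)

/-- The elements of `A` acting trivially on the left cosets of `H`. -/
def Subgroup.trivialModulo (H : Subgroup B) : Subgroup A where
  carrier := {a | ∀ z : B, z⁻¹ * φ a z ∈ H}
  one_mem' z := by simp
  mul_mem' {a c} ha hc z := by
    have hsplit : z⁻¹ * φ (a * c) z = (z⁻¹ * φ c z) * ((φ c z)⁻¹ * φ a (φ c z)) := by
      simp [mul_assoc]
    simpa only [hsplit] using H.mul_mem (hc z) (ha (φ c z))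
  inv_mem' {a} ha z := by
    have hflip : z⁻¹ * φ a⁻¹ z = ((φ a⁻¹ z)⁻¹ * φ a (φ a⁻¹ z))⁻¹ := by
      simp
    simpa only [hflip] using H.inv_mem (ha (φ a⁻¹ z))

theorem Subgroup.closure_commutator_le {s : Set A} (hs : Subgroup.closure s = ⊤)
    {H : Subgroup B} (hH : ∀ a ∈ s, ∀ z : B, z⁻¹ * φ a z ∈ H) :
    Subgroup.closure {w : B | ∃ z : B, ∃ a : A, w = z⁻¹ * φ a z} ≤ H := by
  have hall : Subgroup.closure s ≤ Subgroup.trivialModulo φ H := (Subgroup.closure_le _).mpr hH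
  rw [Subgroup.closure_le]
  rintro _ ⟨z, a, rfl⟩
  exact hall (hs ▸ Subgroup.mem_top a) z

end Group

section CommGroup

variable {A B : Type*} [CommGroup A] [CommGroup B] (φ : A →* MulAut B)

def commutatorHom (a : A) : B →* B where
  toFun z := z⁻¹ * φ a z
  map_one' := by simp
  map_mul' z w := by simp only [mul_inv_rev, map_mul]; ac_rfl

theorem commutatorHom_apply (a : A) (z : B) : commutatorHom φ a z = z⁻¹ * φ a z := rfl

theorem inl_commutatorHom_mul (x y : A) (p q : B) :
    inl (commutatorHom φ x q * commutatorHom φ y p) =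
      (inl (φ (x * y) p)⁻¹ * inr x : B ⋊[φ] A)⁻¹ * (inl (φ (x * y) q) * inr y)⁻¹ *
        (inl (φ (x * y) p)⁻¹ * inr x) * (inl (φ (x * y) q) * inr y) := by
  have hswap (z : B) : φ x (φ y z) = φ y (φ x z) := by
    rw [← MulAut.mul_apply, ← map_mul, mul_comm, map_mul, MulAut.mul_apply]
  ext
  · simp only [commutatorHom_apply, map_mul, map_inv, mul_left, inv_left, right_inl, inv_one,
      map_one, left_inl, MulAut.one_apply, inv_right, mul_right, mul_one, MulAut.mul_apply, hswap,
      mul_inv_rev, inv_inv, right_inr, left_inr, MulAut.inv_apply, one_mul,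
      MulEquiv.symm_apply_apply, inv_mul_cancel_comm]
    rw [← hswap, MulEquiv.symm_apply_apply]
    ac_rfl
  · simp

end CommGroup

theorem stmt_6_general {A B : Type*} [CommGroup A] [CommGroup B]
    (x y : A) (hgen : Subgroup.closure ({x, y} : Set A) = ⊤)
    (φ : A →* MulAut B)
    (b : B) (hb : b ∈ Subgroup.closure {z : B | ∃ b' : B, ∃ a : A, z = b'⁻¹ * φ a b'}) :
    ∃ g h : B ⋊[φ] A, SemidirectProduct.inl b = g⁻¹ * h⁻¹ * g * h := by
  set H := (commutatorHom φ x).range ⊔ (commutatorHom φ y).range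
  have hbH : b ∈ H := by
    refine Subgroup.closure_commutator_le φ hgen ?_ hb
    rintro a (rfl | rfl) z
    · exact Subgroup.mem_sup_left ⟨z, rfl⟩
    · exact Subgroup.mem_sup_right ⟨z, rfl⟩
  obtain ⟨_, ⟨q, rfl⟩, _, ⟨p, rfl⟩, rfl⟩ := Subgroup.mem_sup.mp hbH
  exact ⟨_, _, inl_commutatorHom_mul φ x y p q⟩

/-- If `A = ⟨x,y⟩` is a finite abelian 2-generator group acting on a finite abelian group
`B`, then every element of `[B,A]` is a commutator in the semidirect product `B ⋊ A`. -/
theorem stmt_6 {A B : Type*} [CommGroup A] [Finite A] [CommGroup B] [Finite B]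
    (x y : A) (hgen : Subgroup.closure ({x, y} : Set A) = ⊤)
    (φ : A →* MulAut B)
    (b : B) (hb : b ∈ Subgroup.closure {z : B | ∃ b' : B, ∃ a : A, z = b'⁻¹ * φ a b'}) :
    ∃ g h : B ⋊[φ] A, SemidirectProduct.inl b = g⁻¹ * h⁻¹ * g * h :=
  stmt_6_general x y hgen φ b hb
end

section
/- Let G be a finite group, A and B subgroups with G = AB and coprime orders. If p divides the order of A and p is less than every prime dividing the order of B, and N is a normal subgroup of G of order p, then [N,B] = 1. -/
/-!
Conjugation restricts to a homomorphism `B → Aut N`, and `Aut N` has order `p - 1` since `N` is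
cyclic of prime order. Every prime factor of `|B|` exceeds `p`, so `|B|` is coprime to `p - 1`
and the homomorphism is trivial.
-/

theorem Nat.coprime_sub_one_of_forall_prime_dvd_lt {m p : ℕ} (hp : 1 < p)
    (h : ∀ q : ℕ, q.Prime → q ∣ m → p < q) : m.Coprime (p - 1) :=
  Nat.coprime_of_dvd fun q hq hqm hqp => by
    have hq_le : q ≤ p - 1 := Nat.le_of_dvd (Nat.sub_pos_of_lt hp) hqp
    have hp_lt : p < q := h q hq hqm
    omega

theorem MonoidHom.eq_one_of_coprime_card {G H : Type*} [Group G] [Group H] (f : G →* H)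
    (h : (Nat.card G).Coprime (Nat.card H)) : f = 1 := by
  ext g
  have hG : orderOf (f g) ∣ Nat.card G := (orderOf_map_dvd f g).trans (orderOf_dvd_natCard g)
  exact orderOf_eq_one_iff.mp (Nat.eq_one_of_dvd_coprimes h hG (orderOf_dvd_natCard (f g)))

theorem Subgroup.card_mulAut_of_card_eq_prime {G : Type*} [Group G] {N : Subgroup G} {p : ℕ}
    (hp : p.Prime) (hN : Nat.card N = p) : Nat.card (MulAut N) = p - 1 := by
  have := Fact.mk hp
  have : Finite N := Nat.finite_of_card_ne_zero (hN ▸ hp.ne_zero)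
  have : IsCyclic N := isCyclic_of_prime_card hN
  rw [IsCyclic.card_mulAut, hN, Nat.totient_prime hp]

theorem MulAut.mul_eq_mul_of_conjNormal_eq_one {G : Type*} [Group G] {N : Subgroup G} [N.Normal]
    {g : G} (hg : MulAut.conjNormal (H := N) g = 1) {n : G} (hn : n ∈ N) : g * n = n * g := by
  have := MulAut.conjNormal_apply (H := N) g ⟨n, hn⟩
  rw [hg, MulAut.one_apply] at this
  exact mul_inv_eq_iff_eq_mul.mp this.symm

theorem stmt_14_general {G : Type*} [Group G] (N : Subgroup G) [N.Normal]
    (p : ℕ) (hp : p.Prime) (hN : Nat.card N = p) (B : Subgroup G)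
    (hB : ∀ q : ℕ, q.Prime → q ∣ Nat.card B → p < q) :
    ∀ b ∈ B, ∀ n ∈ N, b * n = n * b := by
  intro b hb n hn
  have hcoprime : (Nat.card B).Coprime (Nat.card (MulAut N)) := by
    rw [Subgroup.card_mulAut_of_card_eq_prime hp hN]
    exact Nat.coprime_sub_one_of_forall_prime_dvd_lt hp.one_lt hB
  have hconj : (MulAut.conjNormal.comp B.subtype : B →* MulAut N) = 1 :=
    MonoidHom.eq_one_of_coprime_card _ hcoprime
  exact MulAut.mul_eq_mul_of_conjNormal_eq_one (DFunLike.congr_fun hconj ⟨b, hb⟩) hn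

theorem stmt_14 {G : Type*} [Group G] [Finite G] (N : Subgroup G) [N.Normal]
    (p : ℕ) (hp : p.Prime) (hN : Nat.card N = p) (B : Subgroup G)
    (hB : ∀ q : ℕ, q.Prime → q ∣ Nat.card B → p < q) :
    ∀ b ∈ B, ∀ n ∈ N, b * n = n * b :=
  stmt_14_general N p hp hN B hB
end
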